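/- Let w, v ∈ W_p be such that w·λ ≺ ws·λ. If w·μ ≺ v·μ, then w·λ ≺ v·λ. -/

import Mathlib

noncomputable section

/-- The real vector space `X ⊗ ℝ`, where `X` is a free abelian group of rank `r`. -/
abbrev Vr (r : ℕ) := Fin r → ℝ

/-- The lattice `X` (identified with `ℤ^r`); its dual lattice `Y` is identified with
the same coordinate lattice via the standard perfect pairing. -/
abbrev Lr (r : ℕ) := Fin r → ℤ

/-- The embedding `X → X ⊗ ℝ`. -/
def toV {r : ℕ} (x : Lr r) : Vr r := fun i => (x i : ℝ)

/-- The perfect pairing `⟨·,·⟩ : X × Y → ℤ`. -/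
def pairZ {r : ℕ} (x y : Lr r) : ℤ := ∑ i, x i * y i

/-- The real extension of the pairing to `(X ⊗ ℝ) × Y → ℝ`. -/
def pairR {r : ℕ} (v : Vr r) (y : Lr r) : ℝ := ∑ i, v i * (y i : ℝ)

/-- The subgroup `ℤI` of `X` generated by a subset `I ⊆ X`. -/
def ZI {r : ℕ} (I : Finset (Lr r)) : AddSubgroup (Lr r) :=
  AddSubgroup.closure (I : Set (Lr r))

/-- The data of a reduced crystallographic root system `Φ ⊆ X` with a fixed positive
system `Φ⁺`, simple roots `Φ_s`, coroots `α∨ ∈ Y`, a prime `p`, and the half-sum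
`ρ ∈ X` of the positive roots. -/
structure ARDatum (r : ℕ) where
  Φ : Finset (Lr r)
  pos : Finset (Lr r)
  simples : Finset (Lr r)
  coroot : Lr r → Lr r
  p : ℕ
  ρ : Lr r
  hp : p.Prime
  root_ne_zero : ∀ α ∈ Φ, α ≠ 0
  pos_sub : pos ⊆ Φ
  simples_sub : simples ⊆ pos
  pos_or_neg : ∀ α ∈ Φ, α ∈ pos ∨ -α ∈ pos
  not_pos_and_neg : ∀ α ∈ pos, -α ∉ pos
  neg_mem : ∀ α ∈ Φ, -α ∈ Φ
  root_coroot_two : ∀ α ∈ Φ, pairZ α (coroot α) = 2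
  reflect_root_mem : ∀ α ∈ Φ, ∀ β ∈ Φ, β - pairZ β (coroot α) • α ∈ Φ
  reflect_coroot_mem : ∀ α ∈ Φ, ∀ β ∈ Φ,
    coroot β - pairZ α (coroot β) • coroot α ∈ coroot '' (Φ : Set (Lr r))
  reduced : ∀ α ∈ Φ, ∀ c : ℤ, c • α ∈ Φ → c = 1 ∨ c = -1
  pos_sum_simples : ∀ β ∈ pos, ∃ c : Lr r → ℕ, β = ∑ α ∈ simples, (c α : ℤ) • α
  two_rho : (2 : ℤ) • ρ = ∑ α ∈ pos, α

namespace ARDatum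

/-- The group of affine transformations of `X ⊗ ℝ`. -/
abbrev G (r : ℕ) := (Vr r) ≃ᵃ[ℝ] (Vr r)

variable {r : ℕ} (D : ARDatum r)

/-- `g` is the affine reflection `s_{α,mp} : v ↦ v − (⟨v,α∨⟩ − mp)·α`. -/
def IsRefl (α : Lr r) (m : ℤ) (g : G r) : Prop :=
  ∀ v : Vr r, g v = v - (pairR v (D.coroot α) - (m : ℝ) * (D.p : ℝ)) • toV α

/-- `g` is the linear reflection `s_α : v ↦ v − ⟨v,α∨⟩·α`. -/
def IsLinRefl (α : Lr r) (g : G r) : Prop := D.IsRefl α 0 g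

/-- `g` is the translation `t_{α,mp} : v ↦ v + mp·α`. -/
def IsTransl (α : Lr r) (m : ℤ) (g : G r) : Prop :=
  ∀ v : Vr r, g v = v + ((m : ℝ) * (D.p : ℝ)) • toV α

/-- The affine Weyl group `W_p`, generated by the `s_α` and the `t_{α,mp}`
for `α ∈ Φ⁺`, `m ∈ ℤ`. -/
def Wp : Subgroup (G r) :=
  Subgroup.closure ({g | ∃ α ∈ D.pos, D.IsLinRefl α g} ∪
    {g | ∃ α ∈ D.pos, ∃ m : ℤ, D.IsTransl α m g})

/-- The finite Weyl group `W`, generated by the `s_α` for `α ∈ Φ⁺`. -/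
def W : Subgroup (G r) :=
  Subgroup.closure {g | ∃ α ∈ D.pos, D.IsLinRefl α g}

/-- The subgroup `W_{I,p}` generated by the `s_α` and `t_{α,mp}` for `α ∈ I`. -/
def WIp (I : Finset (Lr r)) : Subgroup (G r) :=
  Subgroup.closure ({g | ∃ α ∈ I, D.IsLinRefl α g} ∪
    {g | ∃ α ∈ I, ∃ m : ℤ, D.IsTransl α m g})

/-- The subgroup `W_I` of `W` generated by the `s_α` for `α ∈ I`. -/
def WI (I : Finset (Lr r)) : Subgroup (G r) :=
  Subgroup.closure {g | ∃ α ∈ I, D.IsLinRefl α g}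

/-- `g` is a reflection (the reflections of `W_p` are exactly the `s_{α,mp}`). -/
def IsReflection (g : G r) : Prop := ∃ α ∈ D.pos, ∃ m : ℤ, D.IsRefl α m g

/-- The dot action `w·v := w(v+ρ) − ρ`. -/
def dot (g : G r) (v : Vr r) : Vr r := g (v + toV D.ρ) - toV D.ρ

/-- The hyperplane `H_{α,n} = {v : ⟨v+ρ,α∨⟩ = np}`. -/
def Hyp (α : Lr r) (n : ℤ) : Set (Vr r) :=
  {v | pairR (v + toV D.ρ) (D.coroot α) = (n : ℝ) * (D.p : ℝ)}

/-- The complement of the union of all the hyperplanes `H_{α,n}`. -/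
def Reg : Set (Vr r) :=
  {v | ∀ α ∈ D.pos, ∀ n : ℤ, pairR (v + toV D.ρ) (D.coroot α) ≠ (n : ℝ) * (D.p : ℝ)}

/-- The alcove containing `v` (the connected component of `v` in the complement of
the hyperplanes). -/
def alcoveOf (v : Vr r) : Set (Vr r) := connectedComponentIn D.Reg v

/-- `H_{α,n}` contains a wall of `A`, i.e. the interior of `closure A ∩ H_{α,n}`
inside the hyperplane `H_{α,n}` is nonempty. -/
def HasWall (A : Set (Vr r)) (α : Lr r) (n : ℤ) : Prop :=
  ∃ x ∈ closure A ∩ D.Hyp α n, ∃ ε > 0,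
    ∀ y ∈ D.Hyp α n, dist y x < ε → y ∈ closure A

/-- The fundamental alcove `C`. -/
def FundC : Set (Vr r) :=
  {v | ∀ α ∈ D.pos, 0 < pairR (v + toV D.ρ) (D.coroot α) ∧
    pairR (v + toV D.ρ) (D.coroot α) < (D.p : ℝ)}

/-- The closure `C̄` of the fundamental alcove. -/
def FundCBar : Set (Vr r) :=
  {v | ∀ α ∈ D.pos, 0 ≤ pairR (v + toV D.ρ) (D.coroot α) ∧
    pairR (v + toV D.ρ) (D.coroot α) ≤ (D.p : ℝ)}

/-- The region `C_I`. -/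
def CI (I : Finset (Lr r)) : Set (Vr r) :=
  {v | ∀ α ∈ D.pos, α ∈ ZI I → 0 < pairR (v + toV D.ρ) (D.coroot α) ∧
    pairR (v + toV D.ρ) (D.coroot α) < (D.p : ℝ)}

/-- The region `C̄_I`. -/
def CIBar (I : Finset (Lr r)) : Set (Vr r) :=
  {v | ∀ α ∈ D.pos, α ∈ ZI I → 0 ≤ pairR (v + toV D.ρ) (D.coroot α) ∧
    pairR (v + toV D.ρ) (D.coroot α) ≤ (D.p : ℝ)}

/-- `S_p`: the reflections of `W_p` in the walls of the fundamental alcove `C`. -/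
def Sp : Set (G r) :=
  {g | g ∈ D.Wp ∧ ∃ α ∈ D.pos, ∃ m : ℤ, D.IsRefl α m g ∧ D.HasWall D.FundC α m}

/-- One step of the order `⪯` (`↑`): `s_{α,mp}·u ⪯ u` whenever `⟨u+ρ,α∨⟩ ≥ mp`. -/
def UpStep (v u : Vr r) : Prop :=
  ∃ α ∈ D.pos, ∃ m : ℤ, (m : ℝ) * (D.p : ℝ) ≤ pairR (u + toV D.ρ) (D.coroot α) ∧
    v = u - (pairR (u + toV D.ρ) (D.coroot α) - (m : ℝ) * (D.p : ℝ)) • toV α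

/-- The order `⪯` (`↑`): the reflexive-transitive closure of `UpStep`. -/
def Up : Vr r → Vr r → Prop := Relation.ReflTransGen D.UpStep

/-- The strict order `≺`. -/
def Ups (v u : Vr r) : Prop := D.Up v u ∧ v ≠ u

/-- The order `≤`: `v ≤ u` iff `u − v` is a `ℤ≥0`-combination of the simple roots. -/
def Le (v u : Vr r) : Prop :=
  ∃ c : Lr r → ℕ, u - v = ∑ α ∈ D.simples, (c α : ℝ) • toV α

/-- The strict order `<`. -/
def Lt (v u : Vr r) : Prop := D.Le v u ∧ v ≠ u

/-- `X₊ = {ν ∈ X : ⟨ν+ρ,α∨⟩ ≥ 0 for all α ∈ Φ⁺}`, viewed inside `X ⊗ ℝ`. -/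
def XplusR : Set (Vr r) :=
  {v | (∃ ν : Lr r, toV ν = v) ∧ ∀ α ∈ D.pos, 0 ≤ pairR (v + toV D.ρ) (D.coroot α)}

/-- `n_α(v)`: the unique integer with `n_α(v)·p < ⟨v+ρ,α∨⟩ < (n_α(v)+1)·p`
(for `v` on none of the hyperplanes), realised as a floor. -/
def nfl (v : Vr r) (α : Lr r) : ℤ := ⌊pairR (v + toV D.ρ) (D.coroot α) / (D.p : ℝ)⌋

/-- `d(v) = ∑_{α ∈ Φ⁺} n_α(v)`. -/
def dfn (v : Vr r) : ℤ := ∑ α ∈ D.pos, D.nfl v α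

/-- The sublattice `pX` of `X`. -/
def pLat : AddSubgroup (Lr r) where
  carrier := {x | ∃ y : Lr r, x = (D.p : ℤ) • y}
  zero_mem' := ⟨0, by simp⟩
  add_mem' := by rintro a b ⟨y, rfl⟩ ⟨z, rfl⟩; exact ⟨y + z, (smul_add _ _ _).symm⟩
  neg_mem' := by rintro a ⟨y, rfl⟩; exact ⟨-y, (smul_neg _ _).symm⟩

/-- The orbit of `ν + pX` under the dot action of `W_I` on `X/pX`. -/
def dotOrbit (I : Finset (Lr r)) (ν : Lr r) : Set (Lr r ⧸ D.pLat) :=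
  {c | ∃ w ∈ D.WI I, ∃ ν' : Lr r, toV ν' = D.dot w (toV ν) ∧
    c = QuotientAddGroup.mk ν'}

end ARDatum

/-!
The half-open segment `[λ, μ)` lies in the alcove `C`, so for `y ∈ W_p` the segment
`[y·λ, y·μ)` meets no hyperplane `H_{β,m}`: if `y·μ` lies strictly above `H_{β,m}`, so does `y·λ`.
Hence every step `b ⪯ t·b` (`t = s_{β,mp}`) of a chain starting at `w·μ` lifts to `y·λ ⪯ ty·λ`
for every `y` with `y·μ = b`. Following the chain `w·μ ⪯ v·μ` we reach some `x` with
`x·μ = v·μ` while keeping `w·λ ⪯ xg·λ` for all `g` in the stabiliser `{1, s}` of `μ`, which holds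
at the start because `w·λ ⪯ ws·λ`. As `v ∈ x·{1, s}`, this gives `w·λ ⪯ v·λ`; the inequality is
strict because `λ` has trivial stabiliser.
-/

variable {r : ℕ}

lemma pairR_add_left (u v : Vr r) (c : Lr r) : pairR (u + v) c = pairR u c + pairR v c := by
  simp [pairR, add_mul, Finset.sum_add_distrib]

lemma pairR_sub_left (u v : Vr r) (c : Lr r) : pairR (u - v) c = pairR u c - pairR v c := by
  simp [pairR, sub_mul, Finset.sum_sub_distrib]

lemma pairR_smul_left (a : ℝ) (v : Vr r) (c : Lr r) : pairR (a • v) c = a * pairR v c := by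
  simp [pairR, Finset.mul_sum, mul_assoc]

lemma pairR_neg_right (v : Vr r) (c : Lr r) : pairR v (-c) = -pairR v c := by
  simp [pairR]

lemma pairR_toV (x c : Lr r) : pairR (toV x) c = pairZ x c := by
  simp [pairR, pairZ, toV]

lemma pairR_sub_zsmul_right (v : Vr r) (c d : Lr r) (n : ℤ) :
    pairR v (c - n • d) = pairR v c - n * pairR v d := by
  simp [pairR, mul_sub, Finset.sum_sub_distrib, Finset.mul_sum, mul_left_comm]

lemma lt_of_forall_add_mul_sub_ne {a b c : ℝ}
    (hne : ∀ t : ℝ, 0 ≤ t → t < 1 → a + t * (b - a) ≠ c) (hb : c < b) : c < a := by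
  by_contra! ha
  have hba : 0 < b - a := by linarith
  refine hne ((c - a) / (b - a)) (div_nonneg (by linarith) hba.le)
    ((div_lt_one hba).2 (by linarith)) ?_
  field_simp
  ring

lemma forall_add_int_mul_ne_iff {a p : ℝ} (n : ℤ) :
    (∀ k : ℤ, a + n * p ≠ k * p) ↔ ∀ k : ℤ, a ≠ k * p := by
  refine ⟨fun h k hk => h (k + n) ?_, fun h k hk => h (k - n) ?_⟩ <;> push_cast <;> linarith

lemma ne_int_mul_of_pos_of_lt {a p : ℝ} (ha : 0 < a) (hap : a < p) (k : ℤ) : a ≠ k * p := by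
  intro h
  rcases le_or_gt k 0 with hk | hk
  · have : (k : ℝ) ≤ 0 := by exact_mod_cast hk
    nlinarith
  · have : (1 : ℝ) ≤ k := by exact_mod_cast hk
    nlinarith

lemma pairZ_eq_dotProduct (x c : Lr r) : pairZ x c = x ⬝ᵥ c := rfl

lemma eq_zero_of_forall_sub_nsmul_mem {M : Type*} [AddCommGroup M] [IsAddTorsionFree M]
    {S : Set M} (hS : S.Finite) {x u : M} (h : ∀ n : ℕ, x - n • u ∈ S) : u = 0 := by
  by_contra hu
  have hinj : Function.Injective fun n : ℕ => x - n • u := fun a b hab => by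
    have hab' : ((a : ℤ) - b) • u = 0 := by
      rw [sub_smul, natCast_zsmul, natCast_zsmul, sub_eq_zero]
      exact sub_right_injective hab
    rw [IsAddTorsionFree.zsmul_eq_zero_iff_left hu, sub_eq_zero] at hab'
    exact_mod_cast hab'
  exact (Set.infinite_range_of_injective hinj).mono (Set.range_subset_iff.2 h) hS

/-- Iterating the transvection `y ↦ y - ⟨y, e⟩ w` moves `x` along the line `x - ℕ • ⟨x, e⟩ w`,
which cannot stay in the finite set `S` unless `⟨x, e⟩ w = 0`. -/
lemma pairZ_smul_eq_zero_of_transvection_mem {S : Finset (Lr r)} {e w : Lr r}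
    (hS : ∀ y ∈ S, y - pairZ y e • w ∈ S) (hw : pairZ w e = 0) {x : Lr r} (hx : x ∈ S) :
    pairZ x e • w = 0 := by
  refine eq_zero_of_forall_sub_nsmul_mem S.finite_toSet (x := x) fun n => ?_
  induction n with
  | zero => simpa using hx
  | succ n ih =>
    have hpair : pairZ (x - n • pairZ x e • w) e = pairZ x e := by
      simp only [pairZ_eq_dotProduct, sub_dotProduct, smul_dotProduct] at hw ⊢
      simp [hw]
    have := hS _ ih
    rwa [hpair, sub_sub, ← succ_nsmul] at this

namespace ARDatum

variable {D : ARDatum r}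

variable (D) in
/-- The composite `s_β ∘ s_{-β}` is a transvection along `β` preserving `Φ`, which forces
`β∨ + (-β)∨` to vanish on `Φ`; then the root `η` with `η∨ = s_β((-β)∨) = (-β)∨ + 2β∨` pairs
with `Φ` like `β∨`, and `s_β ∘ s_η` is a transvection along `η - β`, forcing `η = β`. -/
theorem coroot_neg {β : Lr r} (hβ : β ∈ D.Φ) : D.coroot (-β) = -D.coroot β := by
  have hnβ := D.neg_mem β hβ
  have hd : β ⬝ᵥ D.coroot β = 2 := D.root_coroot_two β hβ
  have hc : β ⬝ᵥ D.coroot (-β) = -2 := by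
    have := D.root_coroot_two (-β) hnβ
    rw [pairZ_eq_dotProduct, neg_dotProduct] at this
    omega
  have hcd : ∀ x ∈ D.Φ, x ⬝ᵥ D.coroot (-β) = -(x ⬝ᵥ D.coroot β) := by
    intro x hx
    have hT : ∀ y ∈ D.Φ, y - pairZ y (D.coroot (-β) + D.coroot β) • β ∈ D.Φ := by
      intro y hy
      convert D.reflect_root_mem β hβ _ (D.reflect_root_mem (-β) hnβ y hy) using 1
      simp only [pairZ_eq_dotProduct, dotProduct_add, sub_dotProduct, smul_dotProduct,
        neg_dotProduct, hd, smul_eq_mul]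
      module
    have h := pairZ_smul_eq_zero_of_transvection_mem hT
      (by rw [pairZ_eq_dotProduct, dotProduct_add, hc, hd]; rfl) hx
    rw [smul_eq_zero, pairZ_eq_dotProduct, dotProduct_add] at h
    rcases h with h | h
    · omega
    · exact absurd h (D.root_ne_zero β hβ)
  obtain ⟨η, hη, hηc⟩ := D.reflect_coroot_mem β hβ (-β) hnβ
  have hηc' : D.coroot η = D.coroot (-β) + (2 : ℤ) • D.coroot β := by
    rw [hηc, pairZ_eq_dotProduct, hc]
    module
  have hηx : ∀ x ∈ D.Φ, x ⬝ᵥ D.coroot η = x ⬝ᵥ D.coroot β := by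
    intro x hx
    rw [hηc', dotProduct_add, dotProduct_smul, hcd x hx, smul_eq_mul]
    ring
  have hηd : η ⬝ᵥ D.coroot β = 2 := (hηx η hη).symm.trans (D.root_coroot_two η hη)
  have hT : ∀ y ∈ D.Φ, y - pairZ y (D.coroot β) • (η - β) ∈ D.Φ := by
    intro y hy
    convert D.reflect_root_mem β hβ _ (D.reflect_root_mem η hη y hy) using 1
    simp only [pairZ_eq_dotProduct, sub_dotProduct, smul_dotProduct, hηx y hy, hηd,
      smul_eq_mul]
    module
  have h := pairZ_smul_eq_zero_of_transvection_mem hT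
    (by rw [pairZ_eq_dotProduct, sub_dotProduct, hηd, hd]; rfl) hβ
  rw [pairZ_eq_dotProduct, hd, smul_eq_zero, sub_eq_zero] at h
  rcases h with h | rfl
  · omega
  · linear_combination (norm := module) -hηc'

variable (D) in
theorem mem_Reg_iff_forall_root {x : Vr r} :
    x ∈ D.Reg ↔ ∀ δ ∈ D.Φ, ∀ k : ℤ, pairR (x + toV D.ρ) (D.coroot δ) ≠ k * D.p := by
  refine ⟨fun hx δ hδ k => ?_, fun hx α hα => hx α (D.pos_sub hα)⟩
  rcases D.pos_or_neg δ hδ with hpos | hneg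
  · exact hx δ hpos k
  · have := hx (-δ) hneg (-k)
    rw [D.coroot_neg hδ, pairR_neg_right] at this
    push_cast at this
    contrapose! this
    linarith

lemma dot_add_rho (g : G r) (x : Vr r) : D.dot g x + toV D.ρ = g (x + toV D.ρ) := by
  simp [dot]

lemma dot_mul (g h : G r) (x : Vr r) : D.dot (g * h) x = D.dot g (D.dot h x) := by
  simp [dot]

lemma dot_one (x : Vr r) : D.dot 1 x = x := by
  simp [dot]

lemma dot_inv_mul_of_dot_eq {g h : G r} {x : Vr r} (hgh : D.dot g x = D.dot h x) :
    D.dot (g⁻¹ * h) x = x := by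
  rw [dot_mul, ← hgh, ← dot_mul, inv_mul_cancel, dot_one]

lemma dot_lineMap (g : G r) (x z : Vr r) (t : ℝ) :
    D.dot g (AffineMap.lineMap x z t) = AffineMap.lineMap (D.dot g x) (D.dot g z) t := by
  have h : AffineMap.lineMap x z t + toV D.ρ
      = AffineMap.lineMap (x + toV D.ρ) (z + toV D.ρ) t := by
    simp only [AffineMap.lineMap_apply_module]
    module
  rw [dot, h, g.apply_lineMap]
  simp only [dot, AffineMap.lineMap_apply_module]
  module

variable (D) in
def reflectionLin (β : Lr r) : Vr r →ₗ[ℝ] Vr r where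
  toFun v := v - pairR v (D.coroot β) • toV β
  map_add' u v := by
    simp only [pairR_add_left, add_smul]
    abel
  map_smul' a v := by
    simp only [pairR_smul_left, smul_sub, smul_smul, RingHom.id_apply]

variable (D) in
lemma reflectionLin_involutive {β : Lr r} (hβ : pairZ β (D.coroot β) = 2) :
    Function.Involutive (D.reflectionLin β) := by
  intro v
  simp only [reflectionLin, LinearMap.coe_mk, AddHom.coe_mk, pairR_sub_left,
    pairR_smul_left, pairR_toV, hβ, Int.cast_ofNat]
  module

variable (D) in
def reflection {β : Lr r} (hβ : pairZ β (D.coroot β) = 2) (m : ℤ) : G r :=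
  (LinearEquiv.ofInvolutive _ (D.reflectionLin_involutive hβ)).toAffineEquiv.trans
    (AffineEquiv.constVAdd ℝ (Vr r) ((m * D.p : ℝ) • toV β))

section reflection

variable {β : Lr r} (hβ : pairZ β (D.coroot β) = 2) (m : ℤ)

lemma reflection_apply (v : Vr r) :
    D.reflection hβ m v = v - (pairR v (D.coroot β) - m * D.p) • toV β := by
  show (m * D.p : ℝ) • toV β + (v - pairR v (D.coroot β) • toV β) = _
  module

lemma reflection_mul_self : D.reflection hβ m * D.reflection hβ m = 1 := by
  ext1 v
  simp only [AffineEquiv.coe_mul, Function.comp_apply, reflection_apply, pairR_sub_left,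
    pairR_smul_left, pairR_toV, hβ, Int.cast_ofNat, AffineEquiv.coe_one, id_eq]
  module

lemma dot_reflection (x : Vr r) :
    D.dot (D.reflection hβ m) x = x - (pairR (x + toV D.ρ) (D.coroot β) - m * D.p) • toV β := by
  rw [dot, reflection_apply]
  abel

lemma reflection_mem_Wp (hpos : β ∈ D.pos) : D.reflection hβ m ∈ D.Wp := by
  have hlin : D.reflection hβ 0 ∈ D.Wp :=
    Subgroup.subset_closure (Or.inl ⟨β, hpos, D.reflection_apply hβ 0⟩)
  have htransl : AffineEquiv.constVAdd ℝ (Vr r) ((m * D.p : ℝ) • toV β) ∈ D.Wp :=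
    Subgroup.subset_closure (Or.inr ⟨β, hpos, m, fun v => add_comm _ _⟩)
  convert mul_mem htransl hlin using 1
  ext1 v
  simp only [AffineEquiv.coe_mul, Function.comp_apply, reflection_apply,
    AffineEquiv.constVAdd_apply, vadd_eq_add, Int.cast_zero, zero_mul, sub_zero]
  module

end reflection

variable (D) in
def regStabilizer : Subgroup (G r) where
  carrier := {g | ∀ x, D.dot g x ∈ D.Reg ↔ x ∈ D.Reg}
  one_mem' x := by rw [dot_one]
  mul_mem' ha hb x := by rw [dot_mul, ha, hb]
  inv_mem' ha x := by rw [← ha, ← dot_mul, mul_inv_cancel, dot_one]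

lemma mem_regStabilizer_of_isLinRefl {γ : Lr r} (hγ : γ ∈ D.Φ) {g : G r}
    (hg : D.IsLinRefl γ g) : g ∈ D.regStabilizer := by
  have hγ2 := D.root_coroot_two γ hγ
  have hg_eq : g = D.reflection hγ2 0 := AffineEquiv.ext fun v => by rw [hg, reflection_apply]
  have hforward : ∀ x ∈ D.Reg, D.dot g x ∈ D.Reg := by
    intro x hx
    rw [mem_Reg_iff_forall_root] at hx ⊢
    intro δ hδ k
    obtain ⟨ε, hε, hεδ⟩ := D.reflect_coroot_mem γ hγ δ hδ
    convert hx ε hε k using 1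
    rw [hεδ, pairR_sub_zsmul_right, dot_add_rho, hg, pairR_sub_left, pairR_smul_left, pairR_toV]
    push_cast
    ring
  intro x
  refine ⟨fun hx => ?_, hforward x⟩
  rw [← dot_one (D := D) x, ← D.reflection_mul_self hγ2 0, ← hg_eq, dot_mul]
  exact hforward _ hx

lemma mem_regStabilizer_of_isTransl {γ : Lr r} {m : ℤ} {g : G r} (hg : D.IsTransl γ m g) :
    g ∈ D.regStabilizer := by
  intro x
  refine forall₂_congr fun α _ => ?_
  have hshift : pairR (D.dot g x + toV D.ρ) (D.coroot α)
      = pairR (x + toV D.ρ) (D.coroot α) + (m * pairZ γ (D.coroot α) : ℤ) * D.p := by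
    rw [dot_add_rho, hg, pairR_add_left, pairR_smul_left, pairR_toV]
    push_cast
    ring
  rw [hshift]
  exact forall_add_int_mul_ne_iff _

lemma Wp_le_regStabilizer : D.Wp ≤ D.regStabilizer :=
  (Subgroup.closure_le _).2 <| by
    rintro g (⟨γ, hγ, hg⟩ | ⟨γ, -, m, hg⟩)
    · exact mem_regStabilizer_of_isLinRefl (D.pos_sub hγ) hg
    · exact mem_regStabilizer_of_isTransl hg

lemma dot_mem_Reg_iff {g : G r} (hg : g ∈ D.Wp) {x : Vr r} : D.dot g x ∈ D.Reg ↔ x ∈ D.Reg :=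
  Wp_le_regStabilizer hg x

lemma FundC_subset_Reg : D.FundC ⊆ D.Reg := fun _ hx α hα =>
  ne_int_mul_of_pos_of_lt (hx α hα).1 (hx α hα).2

lemma lineMap_mem_FundC {x z : Vr r} (hx : x ∈ D.FundC) (hz : z ∈ D.FundCBar) {t : ℝ}
    (ht0 : 0 ≤ t) (ht1 : t < 1) : AffineMap.lineMap x z t ∈ D.FundC := by
  intro α hα
  obtain ⟨hx0, hx1⟩ := hx α hα
  obtain ⟨hz0, hz1⟩ := hz α hα
  have h : AffineMap.lineMap x z t + toV D.ρ = (1 - t) • (x + toV D.ρ) + t • (z + toV D.ρ) := by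
    rw [AffineMap.lineMap_apply_module]
    module
  rw [h, pairR_add_left, pairR_smul_left, pairR_smul_left]
  constructor <;> nlinarith

/-- Since `y` maps the half-open segment `[x, z)` into the union of the alcoves, the affine
function `t ↦ ⟨y·(x + t(z - x)) + ρ, β∨⟩` does not take the value `mp` on `[0, 1)`. -/
theorem lt_pairR_dot_of_lt {x z : Vr r} (hx : x ∈ D.FundC) (hz : z ∈ D.FundCBar) {y : G r}
    (hy : y ∈ D.Wp) {β : Lr r} (hβ : β ∈ D.pos) {m : ℤ}
    (h : m * D.p < pairR (D.dot y z + toV D.ρ) (D.coroot β)) :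
    m * D.p < pairR (D.dot y x + toV D.ρ) (D.coroot β) := by
  refine lt_of_forall_add_mul_sub_ne (fun t ht0 ht1 => ?_) h
  have hreg := (dot_mem_Reg_iff hy).2 (FundC_subset_Reg (lineMap_mem_FundC hx hz ht0 ht1))
  convert hreg β hβ m using 1
  rw [dot_lineMap, AffineMap.lineMap_apply_module']
  simp only [add_assoc, pairR_add_left, pairR_smul_left, pairR_sub_left]
  ring

lemma upStep_dot_reflection {β : Lr r} (hβ : β ∈ D.pos) (m : ℤ) {u : Vr r}
    (hu : m * D.p ≤ pairR (u + toV D.ρ) (D.coroot β)) :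
    D.UpStep (D.dot (D.reflection (D.root_coroot_two β (D.pos_sub hβ)) m) u) u :=
  ⟨β, hβ, m, hu, dot_reflection _ _ _⟩

theorem exists_up_lift_of_upStep {x z b u : Vr r} (hx : x ∈ D.FundC) (hz : z ∈ D.FundCBar)
    (h : D.UpStep b u) : ∃ t ∈ D.Wp, u = D.dot t b ∧
      ∀ y ∈ D.Wp, D.dot y z = b → D.Up (D.dot y x) (D.dot (t * y) x) := by
  obtain ⟨β, hβ, m, hle, rfl⟩ := h
  have hβ2 := D.root_coroot_two β (D.pos_sub hβ)
  rcases hle.eq_or_lt with heq | hlt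
  · refine ⟨1, one_mem _, by rw [dot_one, ← heq, sub_self, zero_smul, sub_zero], ?_⟩
    intro y _ _
    rw [one_mul]
    exact Relation.ReflTransGen.refl
  set t := D.reflection hβ2 m
  have hts : t * t = 1 := reflection_mul_self hβ2 m
  rw [← dot_reflection hβ2]
  refine ⟨t, reflection_mem_Wp hβ2 m hβ, by rw [← dot_mul, hts, dot_one], ?_⟩
  intro y hy hyz
  have htyz : D.dot (t * y) z = u := by rw [dot_mul, hyz, ← dot_mul, hts, dot_one]
  have hlt' := lt_pairR_dot_of_lt hx hz (mul_mem (reflection_mem_Wp hβ2 m hβ) hy) hβ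
    (htyz ▸ hlt)
  have hstep := upStep_dot_reflection hβ m hlt'.le
  rw [← dot_mul, ← mul_assoc, hts, one_mul] at hstep
  exact Relation.ReflTransGen.single hstep

theorem exists_mem_Wp_of_up {x z : Vr r} (hx : x ∈ D.FundC) (hz : z ∈ D.FundCBar) {w : G r}
    (hw : w ∈ D.Wp) (hbase : ∀ g ∈ D.Wp, D.dot g z = z → D.Up (D.dot w x) (D.dot (w * g) x))
    {u : Vr r} (hu : D.Up (D.dot w z) u) : ∃ y ∈ D.Wp, u = D.dot y z ∧
      ∀ g ∈ D.Wp, D.dot g z = z → D.Up (D.dot w x) (D.dot (y * g) x) := by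
  induction hu with
  | refl => exact ⟨w, hw, rfl, hbase⟩
  | tail _ hstep ih =>
    obtain ⟨y, hy, rfl, hup⟩ := ih
    obtain ⟨t, ht, rfl, hlift⟩ := exists_up_lift_of_upStep hx hz hstep
    refine ⟨t * y, mul_mem ht hy, (dot_mul _ _ _).symm, fun g hg hgz => ?_⟩
    rw [mul_assoc]
    exact (hup g hg hgz).trans (hlift _ (mul_mem hy hg) (by rw [dot_mul, hgz]))

end ARDatum

theorem stmt6_general {r : ℕ} (D : ARDatum r)
    (s : ARDatum.G r)
    (lam mu : Lr r) (hlam : toV lam ∈ D.FundC) (hmu : toV mu ∈ D.FundCBar)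
    (hmustab : ∀ g ∈ D.Wp, (D.dot g (toV mu) = toV mu ↔ g = 1 ∨ g = s))
    (hlamstab : ∀ g ∈ D.Wp, D.dot g (toV lam) = toV lam → g = 1)
    (w v : ARDatum.G r) (hw : w ∈ D.Wp) (hv : v ∈ D.Wp)
    (h1 : D.Ups (D.dot w (toV lam)) (D.dot (w * s) (toV lam)))
    (h2 : D.Ups (D.dot w (toV mu)) (D.dot v (toV mu))) :
    D.Ups (D.dot w (toV lam)) (D.dot v (toV lam)) := by
  have hbase : ∀ g ∈ D.Wp, D.dot g (toV mu) = toV mu →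
      D.Up (D.dot w (toV lam)) (D.dot (w * g) (toV lam)) := by
    intro g hg hgmu
    rcases (hmustab g hg).1 hgmu with rfl | rfl
    · rw [mul_one]
      exact Relation.ReflTransGen.refl
    · exact h1.1
  obtain ⟨y, hy, hvy, hup⟩ := ARDatum.exists_mem_Wp_of_up hlam hmu hw hbase h2.1
  have hup_v := hup _ (mul_mem (inv_mem hy) hv) (ARDatum.dot_inv_mul_of_dot_eq hvy.symm)
  rw [mul_inv_cancel_left] at hup_v
  refine ⟨hup_v, fun hwv => h2.2 ?_⟩
  have hfix := ARDatum.dot_inv_mul_of_dot_eq hwv.symm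
  rw [inv_mul_eq_one.1 (hlamstab _ (mul_mem (inv_mem hv) hw) hfix)]

/-- If `w·λ ≺ ws·λ` and `w·μ ≺ v·μ`, then `w·λ ≺ v·λ`. -/
theorem stmt6 {r : ℕ} (D : ARDatum r)
    (s : ARDatum.G r) (hs : s ∈ D.Sp)
    (lam mu : Lr r) (hlam : toV lam ∈ D.FundC) (hmu : toV mu ∈ D.FundCBar)
    (hmustab : ∀ g ∈ D.Wp, (D.dot g (toV mu) = toV mu ↔ g = 1 ∨ g = s))
    (hlamstab : ∀ g ∈ D.Wp, D.dot g (toV lam) = toV lam → g = 1)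
    (w v : ARDatum.G r) (hw : w ∈ D.Wp) (hv : v ∈ D.Wp)
    (h1 : D.Ups (D.dot w (toV lam)) (D.dot (w * s) (toV lam)))
    (h2 : D.Ups (D.dot w (toV mu)) (D.dot v (toV mu))) :
    D.Ups (D.dot w (toV lam)) (D.dot v (toV lam)) :=
  stmt6_general D s lam mu hlam hmu hmustab hlamstab w v hw hv h1 h2

end
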